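/- For every set S of positive integers, the exponential generating function of the generalized Bell numbers satisfies ∑_{n≥0} B_{n,S} z^n/n! = exp(∑_{s∈S} z^s/s!) as formal power series over ℚ; that is, PowerSeries.mk (fun n => (B_{n,S} : ℚ)/n!) equals the substitution of the power series G := PowerSeries.mk (fun s => if s ∈ S then ((s! : ℚ))⁻¹ else 0) (which has zero constant term since 0 ∉ S) into the exponential power series PowerSeries.exp ℚ. -/

import Mathlib

/-!
Splitting off the block that contains a fixed point gives the recurrence
`B_{n+1,S} = ∑_j C(n,j) [j+1 ∈ S] B_{n-j,S}`, which says exactly that the exponential generating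
function `F` of the `B_{n,S}` satisfies `F' = F G'`. By the chain rule `exp ∘ G` satisfies the same
linear differential equation, and both series have constant term `1`; so `F / (exp ∘ G)` has
derivative `0` and constant term `1`, i.e. the two series agree.
-/

/-- Generalized Bell number `B_{n,S}`: the number of set partitions of `{1,…,n}`
all of whose block sizes lie in `S`. -/
noncomputable def genB (S : Set ℕ) (n : ℕ) : ℕ :=
  Nat.card {P : Finpartition (Finset.univ : Finset (Fin n)) // ∀ p ∈ P.parts, p.card ∈ S}

/-- Formal substitution of a power series `g` (with zero constant term) into a power
series `f`: the `n`-th coefficient of `f(g)` is `∑_{k ≤ n} (coeff k f) · (coeff n (g^k))`,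
which agrees with the usual substitution of power series when `g` has zero constant term. -/
noncomputable def psSubst (g f : PowerSeries ℚ) : PowerSeries ℚ :=
  PowerSeries.mk fun n => ∑ k ∈ Finset.range (n + 1),
    PowerSeries.coeff (R := ℚ) k f * PowerSeries.coeff (R := ℚ) n (g ^ k)

open Finset PowerSeries
open scoped Nat

namespace Finpartition

variable {α : Type*} [DecidableEq α] {s t : Finset α}

theorem parts_avoid_of_mem (P : Finpartition s) (ht : t ∈ P.parts) :
    (P.avoid t).parts = P.parts.erase t := by
  ext q
  rw [mem_erase, mem_avoid]
  constructor
  · rintro ⟨d, hd, hdt, rfl⟩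
    have hdt' : d ≠ t := by rintro rfl; exact hdt le_rfl
    have hdisj : Disjoint d t := P.disjoint hd ht hdt'
    rw [sdiff_eq_self_of_disjoint hdisj]
    exact ⟨hdt', hd⟩
  · rintro ⟨hqt, hq⟩
    have hdisj : Disjoint q t := P.disjoint hq ht hqt
    refine ⟨q, hq, fun hle ↦ ?_, sdiff_eq_self_of_disjoint hdisj⟩
    exact (P.nonempty_of_mem_parts hq).ne_empty (disjoint_self.1 (hdisj.mono_right hle))

def avoidEquiv (ht : t.Nonempty) (hts : t ⊆ s) :
    {P : Finpartition s // t ∈ P.parts} ≃ Finpartition (s \ t) where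
  toFun P := P.1.avoid t
  invFun Q := ⟨Q.extend ht.ne_empty sdiff_disjoint (sdiff_union_of_subset hts), by simp⟩
  left_inv P := by
    ext1; ext1
    simp [parts_avoid_of_mem _ P.2, insert_erase P.2]
  right_inv Q := by
    have htQ : t ∉ Q.parts := fun h ↦
      let ⟨x, hx⟩ := ht; (mem_sdiff.1 (Q.le h hx)).2 hx
    ext1
    rw [parts_avoid_of_mem _ (by simp), extend_parts, erase_insert htQ]

end Finpartition

noncomputable def bellOn {α : Type*} [DecidableEq α] (S : Set ℕ) (s : Finset α) : ℕ :=
  Nat.card {P : Finpartition s // ∀ p ∈ P.parts, #p ∈ S}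

section bellOn

variable {S : Set ℕ} {α : Type*} [DecidableEq α]

theorem bellOn_empty : bellOn S (∅ : Finset α) = 1 := by
  rw [bellOn, Nat.card_eq_one_iff_unique]
  exact ⟨⟨fun P Q ↦ Subtype.ext (Subsingleton.elim (α := Finpartition (⊥ : Finset α)) P.1 Q.1)⟩,
    ⟨⟨Finpartition.empty _, by simp⟩⟩⟩

theorem card_partitions_part_eq {s t : Finset α} {a : α} (hat : a ∈ t) (hts : t ⊆ s)
    [Decidable (#t ∈ S)] :
    Nat.card {P : Finpartition s // (∀ p ∈ P.parts, #p ∈ S) ∧ P.part a = t} =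
      if #t ∈ S then bellOn S (s \ t) else 0 := by
  have hpart (P : Finpartition s) : P.part a = t ↔ t ∈ P.parts :=
    ⟨fun h ↦ h ▸ P.part_mem.2 (hts hat), fun h ↦ P.part_eq_of_mem h hat⟩
  split_ifs with htS
  · refine Nat.card_congr (((Equiv.subtypeEquivRight fun P ↦ by rw [hpart, and_comm]).trans
      (Equiv.subtypeSubtypeEquivSubtypeInter _ _).symm).trans
      ((Finpartition.avoidEquiv ⟨a, hat⟩ hts).subtypeEquiv fun P ↦ ?_))
    simp only [Finpartition.avoidEquiv, Equiv.coe_fn_mk, Finpartition.parts_avoid_of_mem _ P.2,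
      mem_erase, and_imp]
    exact ⟨fun h p _ hp ↦ h p hp,
      fun h p hp ↦ if hpt : p = t then hpt ▸ htS else h p hpt hp⟩
  · exact Nat.card_eq_zero.2 (.inl ⟨fun P ↦ htS (P.2.1 t ((hpart P.1).1 P.2.2))⟩)

theorem bellOn_insert [DecidablePred (· ∈ S)] {s : Finset α} {a : α} (ha : a ∉ s) :
    bellOn S (insert a s) = ∑ t ∈ s.powerset, if #t + 1 ∈ S then bellOn S (s \ t) else 0 := by
  have hmaps (P : Finpartition (insert a s)) : (P.part a).erase a ∈ s.powerset :=
    mem_powerset.2 ((erase_subset_erase a (P.part_subset a)).trans (erase_insert_subset a s))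
  rw [bellOn, Nat.card_eq_fintype_card, Fintype.card_subtype,
    card_eq_sum_card_fiberwise fun P _ ↦ hmaps P]
  refine sum_congr rfl fun t ht ↦ ?_
  have hat : a ∉ t := fun h ↦ ha (mem_powerset.1 ht h)
  have hblock (P : Finpartition (insert a s)) : (P.part a).erase a = t ↔ P.part a = insert a t :=
    erase_eq_iff_eq_insert (P.mem_part (mem_insert_self a s)) hat
  rw [filter_filter, ← Fintype.card_subtype, ← Nat.card_eq_fintype_card,
    Nat.card_congr (Equiv.subtypeEquivRight fun P ↦ by rw [hblock]),
    card_partitions_part_eq (mem_insert_self a t) (insert_subset_insert a (mem_powerset.1 ht)),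
    card_insert_of_notMem hat, insert_sdiff_insert, sdiff_insert_of_notMem ha]

theorem bellOn_eq_sum_choose [DecidablePred (· ∈ S)] {s : Finset α} {m : ℕ} (hs : #s = m + 1)
    (ih : ∀ u : Finset α, #u ≤ m → bellOn S u = genB S #u) :
    bellOn S s = ∑ j ∈ range (m + 1), m.choose j * if j + 1 ∈ S then genB S (m - j) else 0 := by
  obtain ⟨a, ha⟩ := card_pos.1 (by omega : 0 < #s)
  have hm : #(s.erase a) = m := by rw [card_erase_of_mem ha, hs, add_tsub_cancel_right]
  let f (j : ℕ) : ℕ := if j + 1 ∈ S then genB S (m - j) else 0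
  rw [← insert_erase ha, bellOn_insert (notMem_erase a s)]
  calc _ = ∑ t ∈ (s.erase a).powerset, f #t := sum_congr rfl fun t ht ↦ by
          rw [ih _ ((card_le_card sdiff_subset).trans hm.le),
            card_sdiff_of_subset (mem_powerset.1 ht), hm]
    _ = ∑ j ∈ range (m + 1), m.choose j • f j := by rw [sum_powerset_apply_card, hm]

end bellOn

theorem genB_zero (S : Set ℕ) : genB S 0 = 1 := by
  show bellOn S (univ : Finset (Fin 0)) = 1
  rw [univ_eq_empty, bellOn_empty]

theorem bellOn_eq_genB {S : Set ℕ} {α : Type} [DecidableEq α] (s : Finset α) :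
    bellOn S s = genB S #s := by
  classical
  suffices h : ∀ n (β : Type) [DecidableEq β] (u : Finset β), #u ≤ n → bellOn S u = genB S #u from
    h _ α s le_rfl
  intro n
  induction n with
  | zero =>
    intro β _ u hu
    rw [card_eq_zero.1 (Nat.le_zero.1 hu), bellOn_empty, card_empty, genB_zero]
  | succ m ih =>
    intro β _ u hu
    rcases hu.lt_or_eq with hu | hu
    · exact ih β u (Nat.lt_succ_iff.1 hu)
    rw [hu, bellOn_eq_sum_choose hu (ih β)]
    exact (bellOn_eq_sum_choose (s := (univ : Finset (Fin (m + 1)))) (by simp) (ih _)).symm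

theorem genB_succ {S : Set ℕ} [DecidablePred (· ∈ S)] (m : ℕ) :
    genB S (m + 1) = ∑ j ∈ range (m + 1), m.choose j * if j + 1 ∈ S then genB S (m - j) else 0 :=
  bellOn_eq_sum_choose (s := (univ : Finset (Fin (m + 1)))) (by simp) fun u _ ↦ bellOn_eq_genB u

namespace PowerSeries

variable {K : Type*} [Field K] [CharZero K]

theorem eq_of_derivative_eq_mul {f g h : K⟦X⟧} (hf : d⁄dX K f = f * h) (hg : d⁄dX K g = g * h)
    (hc : constantCoeff f = constantCoeff g) (hg0 : constantCoeff g ≠ 0) : f = g := by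
  have hgg : g * g⁻¹ = 1 := PowerSeries.mul_inv_cancel g hg0
  have hquot : f * g⁻¹ = 1 := by
    apply derivative.ext
    · rw [Derivation.leibniz, derivative_inv', hf, hg, Derivation.map_one_eq_zero, smul_eq_mul,
        smul_eq_mul]
      linear_combination (-(f * h * g⁻¹)) * hgg
    · simp [hc, hg0]
  calc f = f * g⁻¹ * g := by rw [mul_assoc, mul_comm g⁻¹, hgg, mul_one]
    _ = g := by rw [hquot, one_mul]

theorem coeff_derivative_mk_div_factorial (a : ℕ → K) (n : ℕ) :
    coeff n (d⁄dX K (mk fun n ↦ a n / n !)) = a (n + 1) / n ! := by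
  rw [coeff_derivative, coeff_mk, Nat.factorial_succ]
  push_cast
  field_simp

theorem coeff_mk_div_factorial_mul (a b : ℕ → K) (n : ℕ) :
    coeff n ((mk fun n ↦ a n / n !) * mk fun n ↦ b n / n !) =
      (∑ j ∈ range (n + 1), n.choose j * a j * b (n - j)) / n ! := by
  rw [coeff_mul, Nat.sum_antidiagonal_eq_sum_range_succ_mk, sum_div]
  refine sum_congr rfl fun j hj ↦ ?_
  have : (n ! : K) ≠ 0 := Nat.cast_ne_zero.2 n.factorial_ne_zero
  rw [coeff_mk, coeff_mk, Nat.cast_choose K (mem_range_succ_iff.1 hj)]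
  field_simp

theorem coeff_pow_eq_zero_of_lt {R : Type*} [CommSemiring R] {g : R⟦X⟧}
    (hg : constantCoeff g = 0) {n k : ℕ} (hnk : n < k) : coeff n (g ^ k) = 0 :=
  coeff_of_lt_order n ((Nat.cast_lt.2 hnk).trans_le (le_order_pow_of_constantCoeff_eq_zero k hg))

theorem psSubst_eq_subst {g : ℚ⟦X⟧} (hg : constantCoeff g = 0) (f : ℚ⟦X⟧) :
    psSubst g f = f.subst g := by
  ext n
  rw [psSubst, coeff_mk, coeff_subst' (HasSubst.of_constantCoeff_zero' hg),
    finsum_eq_sum_of_support_subset (s := range (n + 1))]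
  · simp only [smul_eq_mul]
  · intro k hk
    rw [coe_range, Set.mem_Iio, Nat.lt_succ_iff]
    by_contra! hnk
    exact hk (by simp only [coeff_pow_eq_zero_of_lt hg hnk, smul_zero])

theorem constantCoeff_psSubst (g f : ℚ⟦X⟧) : constantCoeff (psSubst g f) = constantCoeff f := by
  rw [← coeff_zero_eq_constantCoeff_apply, ← coeff_zero_eq_constantCoeff_apply, psSubst, coeff_mk]
  simp

end PowerSeries

theorem derivative_genB_egf (S : Set ℕ) [DecidablePred (· ∈ S)] :
    d⁄dX ℚ (mk fun n ↦ (genB S n : ℚ) / n !) =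
      (mk fun n ↦ (genB S n : ℚ) / n !) *
        d⁄dX ℚ (mk fun s ↦ if s ∈ S then (s ! : ℚ)⁻¹ else 0) := by
  have hG : d⁄dX ℚ (mk fun s ↦ if s ∈ S then (s ! : ℚ)⁻¹ else 0) =
      mk fun j ↦ (if j + 1 ∈ S then 1 else 0 : ℚ) / j ! := by
    ext j
    rw [coeff_derivative, coeff_mk, coeff_mk, Nat.factorial_succ]
    split_ifs
    · push_cast
      field_simp
    · simp
  ext n
  rw [hG, mul_comm, coeff_mk_div_factorial_mul, coeff_derivative_mk_div_factorial, genB_succ]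
  push_cast [apply_ite]
  simp only [mul_one, mul_zero, ite_mul, zero_mul]

theorem statement3 (S : Set ℕ) [DecidablePred (· ∈ S)] (hS : 0 ∉ S) :
    PowerSeries.mk (fun n => (genB S n : ℚ) / n.factorial) =
      psSubst (PowerSeries.mk fun s => if s ∈ S then ((s.factorial : ℚ))⁻¹ else 0)
        (PowerSeries.exp ℚ) := by
  set G : ℚ⟦X⟧ := mk fun s => if s ∈ S then ((s.factorial : ℚ))⁻¹ else 0
  have hG : constantCoeff G = 0 := by
    rw [← coeff_zero_eq_constantCoeff_apply, coeff_mk, if_neg hS]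
  have hconst : constantCoeff (psSubst G (exp ℚ)) = 1 := by simp [constantCoeff_psSubst]
  refine eq_of_derivative_eq_mul (derivative_genB_egf S) ?_ ?_ (by simp [hconst])
  · rw [psSubst_eq_subst hG, derivative_subst (HasSubst.of_constantCoeff_zero' hG),
      derivative_exp]
  · rw [hconst, ← coeff_zero_eq_constantCoeff_apply, coeff_mk, genB_zero]
    simp
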